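/- arXiv:1411.4022 — 3 statements merged into one kernel-verified Lean document; each statement's English description precedes it below -/
import Mathlib

section
/- Let n ≥ 1 and let A, B be finite multisets of pairs (x, y) ∈ ℝ^n × ℝ^n. If p_{a,b}(A) = p_{a,b}(B) for every (a, b) with a ∈ ℕ₊^n and b ∈ ℕ^n, then the multisets obtained from A and B by removing all degenerate pairs are equal. -/
open scoped Classical

/-- `p_{a,b}(M) = Σ_{(x,y) ∈ M} ∏_j (y_j - x_j)^{a_j} (y_j + x_j)^{b_j}`. -/
noncomputable def pInv (n : ℕ) (a b : Fin n → ℕ)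
    (M : Multiset ((Fin n → ℝ) × (Fin n → ℝ))) : ℝ :=
  (M.map (fun xy => ∏ j, (xy.2 j - xy.1 j) ^ a j * (xy.2 j + xy.1 j) ^ b j)).sum

/-!
In the coordinates `u = y - x`, `v = y + x`, the numbers `p_{a,b}(M)` with `a ∈ ℕ₊^n` are the
moments `Σ w · u^{a'} v^b` (`a' ∈ ℕ^n`) of the points `(u, v)` of `M`, weighted by
`w = ∏_j u_j`, which vanishes exactly at the degenerate pairs. Equal moments give
`Σ_A w · P = Σ_B w · P` for every polynomial `P`; choosing `P` nonzero at one point and zero at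
all other points of `A + B` compares the multiplicities of that point, weighted by `w`.
-/

namespace MvPolynomial

variable {σ R X : Type*} [CommRing R]

theorem exists_eval_ne_zero_forall_eval_eq_zero [IsDomain R] (s : Finset (σ → R)) (t : σ → R) :
    ∃ P : MvPolynomial σ R, eval t P ≠ 0 ∧ ∀ u ∈ s, u ≠ t → eval u P = 0 := by
  induction s using Finset.induction_on with
  | empty => exact ⟨1, by simp, by simp⟩
  | insert u s _ ih =>
    obtain ⟨P, hPt, hPs⟩ := ih
    by_cases hut : u = t
    · refine ⟨P, hPt, fun u' hu' hu't => hPs u' ?_ hu't⟩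
      exact (Finset.mem_insert.mp hu').resolve_left (hut ▸ hu't)
    obtain ⟨c, hc⟩ := Function.ne_iff.mp hut
    refine ⟨P * (X c - C (u c)), ?_, ?_⟩
    · simpa [sub_eq_zero, eq_comm] using And.intro hPt hc
    · rintro u' hu' hu't
      rcases Finset.mem_insert.mp hu' with rfl | hu'
      · simp
      · simp [hPs u' hu' hu't]

theorem sum_map_eval_monomial_mul_eq {e : X → σ → R} {A B : Multiset X} (d₀ : σ →₀ ℕ)
    (h : ∀ d, (A.map fun p => eval (e p) (monomial (d₀ + d) 1)).sum =
      (B.map fun p => eval (e p) (monomial (d₀ + d) 1)).sum)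
    (P : MvPolynomial σ R) :
    (A.map fun p => eval (e p) (monomial d₀ 1 * P)).sum =
      (B.map fun p => eval (e p) (monomial d₀ 1 * P)).sum := by
  induction P using MvPolynomial.induction_on' with
  | monomial d c =>
    have hmul : ∀ p, eval (e p) (monomial d₀ 1 * monomial d c) =
        c * eval (e p) (monomial (d₀ + d) 1) := by
      intro p
      rw [monomial_mul, one_mul, eval_monomial, eval_monomial, one_mul]
    simp only [hmul, Multiset.sum_map_mul_left, h]
  | add P Q hP hQ => simp only [mul_add, eval_add, Multiset.sum_map_add, hP, hQ]

theorem count_eq_of_sum_map_eval_mul_eq [IsDomain R] [CharZero R] [DecidableEq X] {e : X → σ → R}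
    (he : Function.Injective e) (W : MvPolynomial σ R) {A B : Multiset X}
    (h : ∀ P, (A.map fun p => eval (e p) (W * P)).sum = (B.map fun p => eval (e p) (W * P)).sum)
    {q : X} (hq : eval (e q) W ≠ 0) : A.count q = B.count q := by
  obtain ⟨P, hPq, hP⟩ :=
    exists_eval_ne_zero_forall_eval_eq_zero ((A + B).toFinset.image e) (e q)
  have hsum : ∀ M ≤ A + B,
      (M.map fun p => eval (e p) (W * P)).sum = M.count q • eval (e q) (W * P) := by
    refine fun M hM => Multiset.sum_map_eq_nsmul_single q fun p hpq hp => ?_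
    have hp' : e p ∈ (A + B).toFinset.image e :=
      Finset.mem_image_of_mem e (Multiset.mem_toFinset.mpr (Multiset.mem_of_le hM hp))
    rw [eval_mul, hP _ hp' (he.ne hpq), mul_zero]
  have hne : eval (e q) (W * P) ≠ 0 := by rw [eval_mul]; exact mul_ne_zero hq hPq
  have := h P
  rw [hsum A (Multiset.le_add_right A B), hsum B (Multiset.le_add_left B A), nsmul_eq_mul,
    nsmul_eq_mul] at this
  exact_mod_cast mul_right_cancel₀ hne this

end MvPolynomial

open MvPolynomial

section PairMoments

variable {n : ℕ}

def lightCone (p : (Fin n → ℝ) × (Fin n → ℝ)) : Fin n ⊕ Fin n → ℝ :=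
  Sum.elim (p.2 - p.1) (p.2 + p.1)

theorem lightCone_injective : Function.Injective (lightCone (n := n)) := by
  intro p q h
  have h₁ (j) : p.2 j - p.1 j = q.2 j - q.1 j := congrFun h (Sum.inl j)
  have h₂ (j) : p.2 j + p.1 j = q.2 j + q.1 j := congrFun h (Sum.inr j)
  refine Prod.ext (funext fun j => ?_) (funext fun j => ?_)
  · linear_combination (h₂ j - h₁ j) / 2
  · linear_combination (h₁ j + h₂ j) / 2

noncomputable def sumElimExponent (a b : Fin n → ℕ) : Fin n ⊕ Fin n →₀ ℕ :=
  Finsupp.equivFunOnFinite.symm (Sum.elim a b)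

theorem sumElimExponent_add (a b a' b' : Fin n → ℕ) :
    sumElimExponent a b + sumElimExponent a' b' = sumElimExponent (a + a') (b + b') := by
  ext (j | j) <;> rfl

theorem eval_lightCone_monomial (a b : Fin n → ℕ) (p : (Fin n → ℝ) × (Fin n → ℝ)) :
    eval (lightCone p) (monomial (sumElimExponent a b) 1) =
      ∏ j, (p.2 j - p.1 j) ^ a j * (p.2 j + p.1 j) ^ b j := by
  rw [eval_monomial, one_mul, Finsupp.prod_fintype _ _ fun _ => pow_zero _,
    Fintype.prod_sum_type, ← Finset.prod_mul_distrib]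
  rfl

theorem pInv_eq_sum_map_eval (a b : Fin n → ℕ) (M : Multiset ((Fin n → ℝ) × (Fin n → ℝ))) :
    pInv n a b M = (M.map fun p => eval (lightCone p) (monomial (sumElimExponent a b) 1)).sum := by
  simp only [pInv, eval_lightCone_monomial]

theorem eval_lightCone_monomial_ne_zero_iff (p : (Fin n → ℝ) × (Fin n → ℝ)) :
    eval (lightCone p) (monomial (sumElimExponent 1 0) 1) ≠ 0 ↔ ∀ j, p.1 j ≠ p.2 j := by
  simp only [eval_lightCone_monomial, Pi.one_apply, Pi.zero_apply, pow_one, pow_zero, mul_one]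
  rw [Finset.prod_ne_zero_iff]
  simp only [Finset.mem_univ, true_implies, sub_ne_zero, ne_comm (a := p.2 _)]

end PairMoments

theorem stmt11_general (n : ℕ)
    (A B : Multiset ((Fin n → ℝ) × (Fin n → ℝ)))
    (h : ∀ a b : Fin n → ℕ, (∀ j, 1 ≤ a j) → pInv n a b A = pInv n a b B) :
    A.filter (fun xy => ∀ j, xy.1 j ≠ xy.2 j) =
      B.filter (fun xy => ∀ j, xy.1 j ≠ xy.2 j) := by
  have hmoments := sum_map_eval_monomial_mul_eq (e := lightCone) (A := A) (B := B)
    (sumElimExponent 1 0) fun d => by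
      have hd : d = sumElimExponent (fun j => d (Sum.inl j)) (fun j => d (Sum.inr j)) := by
        ext (j | j) <;> rfl
      rw [hd, sumElimExponent_add, ← pInv_eq_sum_map_eval, ← pInv_eq_sum_map_eval]
      exact h _ _ fun j => Nat.le_add_right 1 _
  ext q
  rw [Multiset.count_filter, Multiset.count_filter]
  split_ifs with hq
  · exact count_eq_of_sum_map_eval_mul_eq lightCone_injective _ hmoments
      ((eval_lightCone_monomial_ne_zero_iff q).mpr hq)
  · rfl

/-- If `p_{a,b}(A) = p_{a,b}(B)` for all `(a,b)` with `a ∈ ℕ₊^n`, then `A`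
and `B` agree after removing all degenerate pairs (pairs with `x_j = y_j` for some `j`). -/
theorem stmt11 (n : ℕ) (hn : 1 ≤ n)
    (A B : Multiset ((Fin n → ℝ) × (Fin n → ℝ)))
    (h : ∀ a b : Fin n → ℕ, (∀ j, 1 ≤ a j) → pInv n a b A = pInv n a b B) :
    A.filter (fun xy => ∀ j, xy.1 j ≠ xy.2 j) =
      B.filter (fun xy => ∀ j, xy.1 j ≠ xy.2 j) :=
  stmt11_general n A B h
end

section
/- Let n ≥ 1 and let A, B, C, D be finite multisets of pairs (x, y) ∈ ℝ^n × ℝ^n. If p_{a,b}(A) − p_{a,b}(B) = p_{a,b}(C) − p_{a,b}(D) for every (a, b) with a ∈ ℕ₊^n and b ∈ ℕ^n, then the multisets obtained from A + D and from B + C (multiset sum) by removing all degenerate pairs are equal. -/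
open scoped Classical

/-!
In the coordinates `u = y - x`, `v = y + x` a pair becomes a point of `ℝ^(2n)`, and the
hypothesis says that the weighted point measures `Σ_{A+D} (∏ u_j) δ` and `Σ_{B+C} (∏ u_j) δ`
integrate every monomial, hence every polynomial, to the same value. A polynomial that is `1` at
a given point and `0` at the finitely many other points occurring then compares multiplicities,
and the weight `∏ u_j` vanishes exactly at the degenerate pairs.
-/

open MvPolynomial Function

theorem Multiset.sum_map_eq_count_mul {α R : Type*} [DecidableEq α] [NonAssocSemiring R]
    (M : Multiset α) (q : α) (f : α → R) (hf : ∀ z ∈ M, z ≠ q → f z = 0) :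
    (M.map f).sum = M.count q * f q := by
  induction M using Multiset.induction with
  | empty => simp
  | cons a M ih =>
    rw [Multiset.map_cons, Multiset.sum_cons, ih fun z hz => hf z (Multiset.mem_cons_of_mem hz)]
    by_cases ha : a = q
    · rw [ha, Multiset.count_cons_self, Nat.cast_succ, add_one_mul, add_comm]
    · rw [Multiset.count_cons_of_ne (Ne.symm ha), hf a (Multiset.mem_cons_self a M) ha, zero_add]

theorem MvPolynomial.exists_eval_eq_one_and_eval_eq_zero {σ K : Type*} [Field K]
    (p : σ → K) (S : Finset (σ → K)) (hp : p ∉ S) :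
    ∃ P : MvPolynomial σ K, eval p P = 1 ∧ ∀ s ∈ S, eval s P = 0 := by
  induction S using Finset.induction_on with
  | empty => exact ⟨1, map_one _, by simp⟩
  | insert s S _ ih =>
    obtain ⟨hps, hpS⟩ : p ≠ s ∧ p ∉ S := by simpa using hp
    obtain ⟨P, hPp, hPS⟩ := ih hpS
    obtain ⟨i, hi⟩ := Function.ne_iff.1 hps
    refine ⟨P * C (p i - s i)⁻¹ * (X i - C (s i)), ?_, ?_⟩
    · simp [hPp, inv_mul_cancel₀ (sub_ne_zero.2 hi)]
    · simp +contextual [hPS]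

theorem MvPolynomial.sum_mul_eval_eq_of_forall_monomial {α σ R : Type*} [CommSemiring R]
    (v : α → σ → R) (w : α → R) {M N : Multiset α}
    (h : ∀ u, (M.map fun z => w z * eval (v z) (monomial u 1)).sum =
      (N.map fun z => w z * eval (v z) (monomial u 1)).sum)
    (P : MvPolynomial σ R) :
    (M.map fun z => w z * eval (v z) P).sum = (N.map fun z => w z * eval (v z) P).sum := by
  induction P using MvPolynomial.induction_on' with
  | monomial u c =>
    have hc : ∀ z, w z * eval (v z) (monomial u c) = c * (w z * eval (v z) (monomial u 1)) := by
      intro z; simp only [eval_monomial]; ring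
    simp only [hc, Multiset.sum_map_mul_left, h u]
  | add p q hp hq => simp only [map_add, mul_add, Multiset.sum_map_add, hp, hq]

theorem Multiset.filter_ne_zero_eq_of_sum_mul_eval_eq {α σ K : Type*} [Field K] [CharZero K]
    {v : α → σ → K} (hv : Injective v) (w : α → K) {M N : Multiset α}
    (h : ∀ P : MvPolynomial σ K,
      (M.map fun z => w z * eval (v z) P).sum = (N.map fun z => w z * eval (v z) P).sum) :
    M.filter (fun z => w z ≠ 0) = N.filter (fun z => w z ≠ 0) := by
  ext q
  by_cases hq : w q = 0
  · simp [hq]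
  obtain ⟨G, hGq, hG⟩ := exists_eval_eq_one_and_eval_eq_zero (v q)
    (((M + N).map v).toFinset.erase (v q)) (Finset.notMem_erase _ _)
  have hcount : ∀ L ≤ M + N, (L.map fun z => w z * eval (v z) G).sum = L.count q * w q := by
    intro L hL
    rw [Multiset.sum_map_eq_count_mul L q _ fun z hz hzq => ?_, hGq, mul_one]
    rw [hG _ (Finset.mem_erase.2 ⟨hv.ne hzq, Multiset.mem_toFinset.2
      (Multiset.mem_map_of_mem v (Multiset.mem_of_le hL hz))⟩), mul_zero]
  have hGsum := h G
  rw [hcount M (Multiset.le_add_right _ _), hcount N (Multiset.le_add_left _ _)] at hGsum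
  rw [Multiset.count_filter_of_pos (p := fun z => w z ≠ 0) hq,
    Multiset.count_filter_of_pos (p := fun z => w z ≠ 0) hq]
  exact_mod_cast mul_right_cancel₀ hq hGsum

noncomputable def diffSumCoords {ι : Type*} (xy : (ι → ℝ) × (ι → ℝ)) : ι ⊕ ι → ℝ :=
  Sum.elim (xy.2 - xy.1) (xy.2 + xy.1)

theorem diffSumCoords_injective {ι : Type*} : Injective (diffSumCoords (ι := ι)) := by
  intro p q hpq
  have hd (j) : p.2 j - p.1 j = q.2 j - q.1 j := congrFun hpq (Sum.inl j)
  have hs (j) : p.2 j + p.1 j = q.2 j + q.1 j := congrFun hpq (Sum.inr j)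
  ext j <;> linarith [hd j, hs j]

theorem prod_sub_mul_eval_monomial_diffSumCoords {ι : Type*} [Fintype ι]
    (xy : (ι → ℝ) × (ι → ℝ)) (u : ι ⊕ ι →₀ ℕ) :
    (∏ j, (xy.2 j - xy.1 j)) * eval (diffSumCoords xy) (monomial u 1) =
      ∏ j, (xy.2 j - xy.1 j) ^ (u (Sum.inl j) + 1) * (xy.2 j + xy.1 j) ^ u (Sum.inr j) := by
  rw [eval_monomial, Finsupp.prod_fintype _ _ (by simp), Fintype.prod_sum_type, one_mul,
    ← Finset.prod_mul_distrib, ← Finset.prod_mul_distrib]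
  refine Finset.prod_congr rfl fun j _ => ?_
  simp only [diffSumCoords, Sum.elim_inl, Sum.elim_inr, Pi.sub_apply, Pi.add_apply]
  ring

theorem stmt12_general (n : ℕ)
    (A B C D : Multiset ((Fin n → ℝ) × (Fin n → ℝ)))
    (h : ∀ a b : Fin n → ℕ, (∀ j, 1 ≤ a j) →
      pInv n a b A - pInv n a b B = pInv n a b C - pInv n a b D) :
    (A + D).filter (fun xy => ∀ j, xy.1 j ≠ xy.2 j) =
      (B + C).filter (fun xy => ∀ j, xy.1 j ≠ xy.2 j) := by
  have hmonomial (u : Fin n ⊕ Fin n →₀ ℕ) :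
      ((A + D).map fun xy => (∏ j, (xy.2 j - xy.1 j)) * eval (diffSumCoords xy) (monomial u 1)).sum
      = ((B + C).map fun xy =>
          (∏ j, (xy.2 j - xy.1 j)) * eval (diffSumCoords xy) (monomial u 1)).sum := by
    have hu := h (fun j => u (Sum.inl j) + 1) (fun j => u (Sum.inr j)) fun j => Nat.le_add_left 1 _
    simp only [prod_sub_mul_eval_monomial_diffSumCoords]
    simp only [pInv, Multiset.map_add, Multiset.sum_add] at hu ⊢
    linarith
  have hfilter := Multiset.filter_ne_zero_eq_of_sum_mul_eval_eq diffSumCoords_injective _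
    (sum_mul_eval_eq_of_forall_monomial _ _ hmonomial)
  have hweight (xy : (Fin n → ℝ) × (Fin n → ℝ)) :
      (∏ j, (xy.2 j - xy.1 j)) ≠ 0 ↔ ∀ j, xy.1 j ≠ xy.2 j := by
    rw [Finset.prod_ne_zero_iff]
    exact forall_congr' fun j => by rw [sub_ne_zero, ne_comm]; simp
  simpa only [hweight] using hfilter

/-- If `p_{a,b}(A) - p_{a,b}(B) = p_{a,b}(C) - p_{a,b}(D)` for all `(a,b)`
with `a ∈ ℕ₊^n`, then `A + D` and `B + C` agree after removing all degenerate pairs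
(pairs with `x_j = y_j` for some `j`). -/
theorem stmt12 (n : ℕ) (hn : 1 ≤ n)
    (A B C D : Multiset ((Fin n → ℝ) × (Fin n → ℝ)))
    (h : ∀ a b : Fin n → ℕ, (∀ j, 1 ≤ a j) →
      pInv n a b A - pInv n a b B = pInv n a b C - pInv n a b D) :
    (A + D).filter (fun xy => ∀ j, xy.1 j ≠ xy.2 j) =
      (B + C).filter (fun xy => ∀ j, xy.1 j ≠ xy.2 j) :=
  stmt12_general n A B C D h
end

section
/- Let m, N ≥ 1 and let z : {1,…,m} × {1,…,N} → ℝ have all values positive, with the rows z_i = (z_{i,1}, …, z_{i,N}) in decreasing lexicographic order, i.e., z_1 ≥_lex z_2 ≥_lex ⋯ ≥_lex z_m. Then for every i ∈ {1,…,m} and j ∈ {1,…,N}, z_{i,j} = lim_{k→∞} ( ( Σ_{i'=1}^m ∏_{j'=1}^{j} z_{i',j'}^{k^{j+1−j'}} − Σ_{i'=1}^{i−1} ∏_{j'=1}^{j} z_{i',j'}^{k^{j+1−j'}} ) / ∏_{j'=1}^{j−1} z_{i,j'}^{k^{j+1−j'}} )^{1/k}, where k ranges over the natural numbers. -/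
open Filter

/-- `u ≤_lex v` on `ℝ^N`: `u = v`, or `u_j < v_j` at the first index `j` where they
differ. -/
def lexLE {N : ℕ} (u v : Fin N → ℝ) : Prop :=
  u = v ∨ ∃ j, (∀ j', j' < j → u j' = v j') ∧ u j < v j

/-!
Write `P_{i'}(k) = ∏_{j' ≤ j} z_{i',j'}^{k^{j+1-j'}}`, so that the numerator is
`∑_{i' ≥ i} P_{i'}(k)` and `P_i(k) = z_{i,j}^k` times the denominator. Taking logarithms,
`log P_i(k) - log P_{i'}(k)` is a polynomial in `k` whose leading coefficient is
`log z_{i,j₀} - log z_{i',j₀}` at the first index `j₀` where the rows differ; when `i ≤ i'`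
it is positive by the lexicographic order, so eventually `P_{i'}(k) ≤ P_i(k)`. The quotient is
therefore eventually squeezed between `z_{i,j}^k` and `m z_{i,j}^k`, and `m^{1/k} → 1`.
-/

open Asymptotics in
theorem eventually_pos_sum_mul_pow_of_dominant {ι : Type*} {s : Finset ι} {c : ι → ℝ}
    {e : ι → ℕ} {i₀ : ι} (hi₀ : i₀ ∈ s) (hc : 0 < c i₀)
    (hdom : ∀ i ∈ s, i ≠ i₀ → c i ≠ 0 → e i < e i₀) :
    ∀ᶠ k : ℕ in atTop, 0 < ∑ i ∈ s, c i * (k : ℝ) ^ e i := by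
  classical
  have hrest : (fun k : ℕ => ∑ i ∈ s.erase i₀, c i * (k : ℝ) ^ e i) =o[atTop]
      fun k : ℕ => (k : ℝ) ^ e i₀ := by
    refine IsLittleO.fun_sum fun i hi => ?_
    obtain ⟨hne, his⟩ := Finset.mem_erase.mp hi
    by_cases hci : c i = 0
    · simp [hci]
    · exact ((isLittleO_pow_pow_atTop_of_lt (hdom i his hne hci)).comp_tendsto
        tendsto_natCast_atTop_atTop).const_mul_left (c i)
  filter_upwards [hrest.bound (half_pos hc), eventually_ge_atTop 1] with k hk hk1
  have hpow : 0 < (k : ℝ) ^ e i₀ := pow_pos (by exact_mod_cast hk1) _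
  rw [Real.norm_of_nonneg hpow.le, Real.norm_eq_abs, abs_le] at hk
  rw [← Finset.add_sum_erase s _ hi₀]
  linarith [hk.1, mul_pos hc hpow]

theorem tendsto_rpow_inv_of_pow_le_of_le_const_mul {x : ℕ → ℝ} {a c : ℝ} (ha : 0 ≤ a)
    (hc : 0 < c) (hlow : ∀ᶠ k in atTop, a ^ k ≤ x k)
    (hup : ∀ᶠ k in atTop, x k ≤ c * a ^ k) :
    Tendsto (fun k : ℕ => x k ^ (k : ℝ)⁻¹) atTop (nhds a) := by
  have hroot : Tendsto (fun k : ℕ => c ^ (k : ℝ)⁻¹ * a) atTop (nhds a) := by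
    have hinv : Tendsto (fun k : ℕ => (k : ℝ)⁻¹) atTop (nhds 0) :=
      tendsto_inv_atTop_zero.comp tendsto_natCast_atTop_atTop
    simpa using ((Real.continuousAt_const_rpow hc.ne').tendsto.comp hinv).mul_const a
  refine tendsto_of_tendsto_of_tendsto_of_le_of_le' tendsto_const_nhds hroot ?_ ?_
  · filter_upwards [hlow, eventually_ne_atTop 0] with k hk hk0
    calc a = (a ^ k) ^ (k : ℝ)⁻¹ := (Real.pow_rpow_inv_natCast ha hk0).symm
      _ ≤ x k ^ (k : ℝ)⁻¹ := by gcongr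
  · filter_upwards [hlow, hup, eventually_ne_atTop 0] with k hkl hku hk0
    calc x k ^ (k : ℝ)⁻¹ ≤ (c * a ^ k) ^ (k : ℝ)⁻¹ := by
          gcongr
          exact (pow_nonneg ha k).trans hkl
      _ = c ^ (k : ℝ)⁻¹ * a := by
          rw [Real.mul_rpow hc.le (pow_nonneg ha k), Real.pow_rpow_inv_natCast ha hk0]

theorem tendsto_rpow_inv_tail_sum_div {ι : Type*} [Fintype ι] [LinearOrder ι]
    {P : ι → ℕ → ℝ} {D : ℕ → ℝ} {a : ℝ} (i : ι) (ha : 0 ≤ a)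
    (hPi : ∀ k, P i k = a ^ k * D k) (hP : ∀ i' k, 0 ≤ P i' k) (hD : ∀ k, 0 < D k)
    (hdom : ∀ i', i ≤ i' → ∀ᶠ k in atTop, P i' k ≤ P i k) :
    Tendsto (fun k : ℕ =>
      ((∑ i', P i' k - ∑ i' ∈ Finset.univ.filter (· < i), P i' k) / D k) ^ (k : ℝ)⁻¹)
      atTop (nhds a) := by
  set T := Finset.univ.filter fun i' => ¬ i' < i
  have hiT : i ∈ T := by simp [T]
  have htail : ∀ k, ∑ i', P i' k - ∑ i' ∈ Finset.univ.filter (· < i), P i' k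
      = ∑ i' ∈ T, P i' k := fun k => by
    rw [← Finset.sum_filter_add_sum_filter_not Finset.univ (· < i), add_sub_cancel_left]
  simp only [htail]
  refine tendsto_rpow_inv_of_pow_le_of_le_const_mul ha (c := Fintype.card ι)
    (Nat.cast_pos.2 (Fintype.card_pos_iff.2 ⟨i⟩)) (Eventually.of_forall fun k => ?_) ?_
  · rw [le_div_iff₀ (hD k), ← hPi]
    exact Finset.single_le_sum (fun i' _ => hP i' k) hiT
  · filter_upwards [(eventually_all_finset T).2 fun i' hi' =>
      hdom i' (not_lt.1 (Finset.mem_filter.1 hi').2)] with k hk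
    rw [div_le_iff₀ (hD k), mul_assoc, ← hPi]
    calc ∑ i' ∈ T, P i' k ≤ T.card • P i k := Finset.sum_le_card_nsmul _ _ _ hk
      _ ≤ Fintype.card ι * P i k := by
          rw [nsmul_eq_mul]
          gcongr
          · exact hP i k
          · exact_mod_cast Finset.card_le_univ _

theorem prod_filter_le_rpow_eq_pow_mul {N : ℕ} (j : Fin N) (u : Fin N → ℝ) (k : ℕ) :
    ∏ j' ∈ Finset.univ.filter (· ≤ j), u j' ^ ((k : ℝ) ^ ((j : ℕ) - (j' : ℕ) + 1))
      = u j ^ k * ∏ j' ∈ Finset.univ.filter (· < j),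
          u j' ^ ((k : ℝ) ^ ((j : ℕ) - (j' : ℕ) + 1)) := by
  rw [Finset.filter_ge_eq_Iic, Finset.filter_gt_eq_Iio, ← Finset.Iio_insert,
    Finset.prod_insert Finset.notMem_Iio_self, Nat.sub_self, zero_add, pow_one,
    Real.rpow_natCast]

theorem eventually_prod_rpow_le_of_lexLE {N : ℕ} (j : Fin N) {u v : Fin N → ℝ}
    (hu : ∀ j', 0 < u j') (hv : ∀ j', 0 < v j') (h : lexLE v u) :
    ∀ᶠ k : ℕ in atTop,
      ∏ j' ∈ Finset.univ.filter (· ≤ j), v j' ^ ((k : ℝ) ^ ((j : ℕ) - (j' : ℕ) + 1))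
        ≤ ∏ j' ∈ Finset.univ.filter (· ≤ j),
            u j' ^ ((k : ℝ) ^ ((j : ℕ) - (j' : ℕ) + 1)) := by
  rcases h with rfl | ⟨j₀, heq, hlt⟩
  · exact Eventually.of_forall fun _ => le_rfl
  rcases lt_or_ge j j₀ with hjj₀ | hj₀j
  · refine Eventually.of_forall fun k => (Finset.prod_congr rfl fun j' hj' => ?_).le
    rw [heq j' ((Finset.mem_filter.1 hj').2.trans_lt hjj₀)]
  have hexp : ∀ w : Fin N → ℝ, (∀ j', 0 < w j') → ∀ k : ℕ,
      ∏ j' ∈ Finset.univ.filter (· ≤ j), w j' ^ ((k : ℝ) ^ ((j : ℕ) - (j' : ℕ) + 1))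
        = Real.exp (∑ j' ∈ Finset.univ.filter (· ≤ j),
            Real.log (w j') * (k : ℝ) ^ ((j : ℕ) - (j' : ℕ) + 1)) := fun w hw k => by
    rw [Real.exp_sum]
    exact Finset.prod_congr rfl fun j' _ => Real.rpow_def_of_pos (hw j') _
  have hdom : ∀ j' ∈ Finset.univ.filter (· ≤ j), j' ≠ j₀ →
      Real.log (u j') - Real.log (v j') ≠ 0 → (j : ℕ) - j' + 1 < (j : ℕ) - j₀ + 1 := by
    intro j' hj' hne hlog
    have hj₀j' : j₀ < j' :=
      (not_lt.1 fun hj'j₀ => hlog (by rw [heq j' hj'j₀, sub_self])).lt_of_ne hne.symm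
    have hj'j : j' ≤ j := (Finset.mem_filter.1 hj').2
    rw [Fin.lt_def] at hj₀j'
    rw [Fin.le_def] at hj'j
    omega
  filter_upwards [eventually_pos_sum_mul_pow_of_dominant (i₀ := j₀)
    (Finset.mem_filter.2 ⟨Finset.mem_univ _, hj₀j⟩)
    (sub_pos.2 (Real.log_lt_log (hv j₀) hlt)) hdom] with k hk
  rw [hexp u hu, hexp v hv, Real.exp_le_exp, ← sub_nonneg, ← Finset.sum_sub_distrib]
  simpa only [sub_mul] using hk.le

theorem stmt18_general (m N : ℕ)
    (z : Fin m → Fin N → ℝ) (hz : ∀ i j, 0 < z i j)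
    (hlex : ∀ i i' : Fin m, i ≤ i' → lexLE (z i') (z i))
    (i : Fin m) (j : Fin N) :
    Tendsto
      (fun k : ℕ =>
        (((∑ i' : Fin m, ∏ j' ∈ Finset.univ.filter (fun j' : Fin N => j' ≤ j),
              z i' j' ^ ((k : ℝ) ^ ((j : ℕ) - (j' : ℕ) + 1))) -
          ∑ i' ∈ Finset.univ.filter (fun i' : Fin m => i' < i),
            ∏ j' ∈ Finset.univ.filter (fun j' : Fin N => j' ≤ j),
              z i' j' ^ ((k : ℝ) ^ ((j : ℕ) - (j' : ℕ) + 1))) /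
          ∏ j' ∈ Finset.univ.filter (fun j' : Fin N => j' < j),
            z i j' ^ ((k : ℝ) ^ ((j : ℕ) - (j' : ℕ) + 1))) ^ ((k : ℝ)⁻¹))
      atTop (nhds (z i j)) := by
  have hrowPos : ∀ (s : Finset (Fin N)) i' (k : ℕ),
      0 < ∏ j' ∈ s, z i' j' ^ ((k : ℝ) ^ ((j : ℕ) - (j' : ℕ) + 1)) :=
    fun s i' k => Finset.prod_pos fun j' _ => Real.rpow_pos_of_pos (hz i' j') _
  exact tendsto_rpow_inv_tail_sum_div i (hz i j).le (prod_filter_le_rpow_eq_pow_mul j (z i))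
    (fun i' k => (hrowPos _ i' k).le) (hrowPos _ i)
    fun i' hi' => eventually_prod_rpow_le_of_lexLE j (hz i) (hz i') (hlex i i' hi')

/-- For `z : {1,…,m} × {1,…,N} → ℝ` with all values positive and rows in
decreasing lexicographic order, every value `z_{i,j}` is recovered as
`lim_{k→∞} ((Σ_{i'=1}^m ∏_{j'=1}^j z_{i',j'}^{k^{j+1-j'}}
  − Σ_{i'=1}^{i-1} ∏_{j'=1}^j z_{i',j'}^{k^{j+1-j'}}) / ∏_{j'=1}^{j-1} z_{i,j'}^{k^{j+1-j'}})^{1/k}`.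
Indices here are 0-based (`i : Fin m`, `j : Fin N`), so `j' ≤ j` ranges over the 1-based
`j' = 1, …, j+1` and the exponent `k^{(j+1)+1-(j'+1)} = k^{j-j'+1}`; powers with real
exponents are real powers.  Empty sums are 0 and empty products are 1. -/
theorem stmt18 (m N : ℕ) (hm : 1 ≤ m) (hN : 1 ≤ N)
    (z : Fin m → Fin N → ℝ) (hz : ∀ i j, 0 < z i j)
    (hlex : ∀ i i' : Fin m, i ≤ i' → lexLE (z i') (z i))
    (i : Fin m) (j : Fin N) :
    Tendsto
      (fun k : ℕ =>
        (((∑ i' : Fin m, ∏ j' ∈ Finset.univ.filter (fun j' : Fin N => j' ≤ j),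
              z i' j' ^ ((k : ℝ) ^ ((j : ℕ) - (j' : ℕ) + 1))) -
          ∑ i' ∈ Finset.univ.filter (fun i' : Fin m => i' < i),
            ∏ j' ∈ Finset.univ.filter (fun j' : Fin N => j' ≤ j),
              z i' j' ^ ((k : ℝ) ^ ((j : ℕ) - (j' : ℕ) + 1))) /
          ∏ j' ∈ Finset.univ.filter (fun j' : Fin N => j' < j),
            z i j' ^ ((k : ℝ) ^ ((j : ℕ) - (j' : ℕ) + 1))) ^ ((k : ℝ)⁻¹))
      atTop (nhds (z i j)) :=
  stmt18_general m N z hz hlex i j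
end
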